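/- With F_0 and Q as in the Hodge-BGW genus-zero setup, the mixed derivative satisfies ∂²F_0/∂x∂T_{2b+1} = −Q^{2b+1}/(b!(2b+1)) for all b ≥ 0, and ∂²F_0/∂x² = (1/2)·log Q. -/

import Mathlib

noncomputable section

/-- The ring `ℂ[[x+2]][[T_1, T_3, T_5, …]]`; variable `a : ℕ` stands for `T_{2a+1}`. -/
abbrev OSRing := MvPowerSeries ℕ (PowerSeries ℂ)

/-- The series `x = (x+2) - 2` in `ℂ[[x+2]]`. -/
def xser : PowerSeries ℂ := PowerSeries.X - 2

/-- Formal partial derivative `∂/∂T_{2a+1}`. -/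
def pderivT (a : ℕ) (f : OSRing) : OSRing :=
  fun d => (d a + 1) • MvPowerSeries.coeff (d + Finsupp.single a 1) f

/-- Formal partial derivative `∂/∂x`, acting on coefficients. -/
def pderivX (f : OSRing) : OSRing :=
  fun d => PowerSeries.derivative (R := ℂ) (MvPowerSeries.coeff d f)

/-- `Q` solves `Q = -x/2 + Σ_{a ≥ 0} T_{2a+1} Q^{2a+1}/a!`. -/
def SolvesQ (Q : OSRing) : Prop :=
  ∀ d : ℕ →₀ ℕ,
    MvPowerSeries.coeff d Q
      = MvPowerSeries.coeff d
          (MvPowerSeries.C (σ := ℕ) (R := PowerSeries ℂ) ((-(1:ℂ)/2) • xser))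
        + ∑ a ∈ d.support,
            ((a.factorial : ℂ)⁻¹) •
              MvPowerSeries.coeff d (MvPowerSeries.X a * Q ^ (2*a+1))

/-- `LQ` is the formal logarithm `log Q`: it is characterized by `Q·d(LQ) = d(Q)` for the
formal derivations `∂/∂x` and all `∂/∂T_{2a+1}`, together with vanishing of its total
constant term (note `Q(-2, 0) = 1`, so `log Q` has zero constant term). -/
def IsLogQ (Q LQ : OSRing) : Prop :=
  pderivX LQ * Q = pderivX Q ∧ (∀ a : ℕ, pderivT a LQ * Q = pderivT a Q) ∧
    PowerSeries.coeff (R := ℂ) 0 (MvPowerSeries.coeff (0 : ℕ →₀ ℕ) LQ) = 0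

/-- `T̃_{2a+1} = T_{2a+1} - δ_{a,0}`. -/
def Ttil (a : ℕ) : OSRing :=
  MvPowerSeries.X a - (if a = 0 then 1 else 0)

/-- The genus-zero free energy
`F₀ = (1/2) Σ_{a,b≥0} T̃_{2a+1} T̃_{2b+1} Q^{2a+2b+2}/(a! b! (a+b+1))
  − x Σ_{b≥0} T̃_{2b+1} Q^{2b+1}/(b!(2b+1)) + (x²/4) log Q`,
defined coefficientwise (each infinite sum is locally finite: the term indexed by `a ≥ 1`
is a multiple of the variable `T_{2a+1}`). -/
def F0 (Q LQ : OSRing) : OSRing := fun d =>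
  ((1:ℂ)/2) • (∑ a ∈ insert 0 d.support, ∑ b ∈ insert 0 d.support,
      (((a.factorial : ℂ) * (b.factorial : ℂ) * ((a:ℂ) + (b:ℂ) + 1))⁻¹) •
        MvPowerSeries.coeff d (Ttil a * Ttil b * Q ^ (2*a+2*b+2)))
    - ∑ b ∈ insert 0 d.support,
        (((b.factorial : ℂ) * (2*(b:ℂ)+1))⁻¹) •
          MvPowerSeries.coeff d
            (MvPowerSeries.C (σ := ℕ) (R := PowerSeries ℂ) xser * Ttil b * Q ^ (2*b+1))
    + MvPowerSeries.coeff d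
        (((1:ℂ)/4) • (MvPowerSeries.C (σ := ℕ) (R := PowerSeries ℂ) xser ^ 2 * LQ))

namespace OSaux

open MvPowerSeries Finsupp

lemma coeff_pX (f : OSRing) (d : ℕ →₀ ℕ) :
    coeff d (pderivX f) = PowerSeries.derivative (R := ℂ) (coeff d f) := rfl

lemma coeff_pT (b : ℕ) (f : OSRing) (d : ℕ →₀ ℕ) :
    coeff d (pderivT b f) = (d b + 1) • coeff (d + single b 1) f := rfl

lemma coeff_csmul (c : ℂ) (f : OSRing) (d : ℕ →₀ ℕ) :
    coeff d (c • f) = c • coeff d f := rfl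

lemma pX_add (f g : OSRing) : pderivX (f + g) = pderivX f + pderivX g := by
  refine MvPowerSeries.ext fun d => ?_; rw [map_add, coeff_pX, coeff_pX, coeff_pX, map_add, map_add]

lemma pX_sub (f g : OSRing) : pderivX (f - g) = pderivX f - pderivX g := by
  refine MvPowerSeries.ext fun d => ?_; rw [map_sub, coeff_pX, coeff_pX, coeff_pX, map_sub, map_sub]

lemma pX_zero : pderivX (0 : OSRing) = 0 := by
  refine MvPowerSeries.ext fun d => ?_; rw [coeff_pX, map_zero, map_zero]

lemma pX_smul (c : ℂ) (f : OSRing) : pderivX (c • f) = c • pderivX f := by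
  refine MvPowerSeries.ext fun d => ?_; rw [coeff_pX, coeff_csmul, coeff_csmul, coeff_pX, Derivation.map_smul]

lemma pT_add (b : ℕ) (f g : OSRing) : pderivT b (f + g) = pderivT b f + pderivT b g := by
  refine MvPowerSeries.ext fun d => ?_; rw [map_add, coeff_pT, coeff_pT, coeff_pT, map_add, smul_add]

lemma pT_sub (b : ℕ) (f g : OSRing) : pderivT b (f - g) = pderivT b f - pderivT b g := by
  refine MvPowerSeries.ext fun d => ?_; rw [map_sub, coeff_pT, coeff_pT, coeff_pT, map_sub, smul_sub]

lemma pT_zero (b : ℕ) : pderivT b (0 : OSRing) = 0 := by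
  refine MvPowerSeries.ext fun d => ?_; rw [coeff_pT, map_zero, map_zero, smul_zero]

lemma pT_smul (b : ℕ) (c : ℂ) (f : OSRing) : pderivT b (c • f) = c • pderivT b f := by
  refine MvPowerSeries.ext fun d => ?_; rw [coeff_pT, coeff_csmul, coeff_csmul, coeff_pT, smul_comm]

lemma pX_pT_comm (b : ℕ) (f : OSRing) : pderivX (pderivT b f) = pderivT b (pderivX f) := by
  refine MvPowerSeries.ext fun d => ?_
  rw [coeff_pX, coeff_pT, coeff_pT, coeff_pX, ← Nat.cast_smul_eq_nsmul ℂ,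
    ← Nat.cast_smul_eq_nsmul ℂ, Derivation.map_smul]

lemma pX_mul (f g : OSRing) : pderivX (f * g) = pderivX f * g + f * pderivX g := by
  classical
  refine MvPowerSeries.ext fun d => ?_
  rw [map_add, coeff_pX, coeff_mul, map_sum, coeff_mul, coeff_mul, ← Finset.sum_add_distrib]
  refine Finset.sum_congr rfl fun p _ => ?_
  rw [coeff_pX, coeff_pX, Derivation.leibniz, smul_eq_mul, smul_eq_mul]
  ring

lemma pT_mul (b : ℕ) (f g : OSRing) :
    pderivT b (f * g) = pderivT b f * g + f * pderivT b g := by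
  classical
  refine MvPowerSeries.ext fun d => ?_
  rw [map_add, coeff_pT, coeff_mul, coeff_mul, coeff_mul]
  have key : ∀ p ∈ Finset.HasAntidiagonal.antidiagonal (d + single b 1),
      (d b + 1) • (coeff p.1 f * coeff p.2 g)
        = p.1 b • (coeff p.1 f * coeff p.2 g)
          + p.2 b • (coeff p.1 f * coeff p.2 g) := by
    intro p hp
    rw [Finset.HasAntidiagonal.mem_antidiagonal] at hp
    have : p.1 b + p.2 b = d b + 1 := by
      have := congrArg (fun m : ℕ →₀ ℕ => m b) hp
      simpa [Finsupp.add_apply, Finsupp.single_apply] using this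
    rw [← add_smul, this]
  rw [Finset.smul_sum, Finset.sum_congr rfl key, Finset.sum_add_distrib]
  have claim1 : (Finset.HasAntidiagonal.antidiagonal (d + single b 1)).sum
        (fun p : (ℕ →₀ ℕ) × (ℕ →₀ ℕ) => p.1 b • (coeff p.1 f * coeff p.2 g))
      = ∑ p ∈ Finset.HasAntidiagonal.antidiagonal d, coeff p.1 (pderivT b f) * coeff p.2 g := by
    symm
    refine Finset.sum_bij_ne_zero (fun q _ _ => (q.1 + single b 1, q.2)) ?_ ?_ ?_ ?_
    · intro q hq _
      rw [Finset.HasAntidiagonal.mem_antidiagonal] at hq ⊢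
      rw [add_right_comm, hq]
    · intro q₁ h₁ h₁' q₂ h₂ h₂' heq
      have h1 := congrArg Prod.fst heq
      have h2 := congrArg Prod.snd heq
      simp only at h1 h2
      exact Prod.ext (add_right_cancel h1) h2
    · intro p hp hpne
      rw [Finset.HasAntidiagonal.mem_antidiagonal] at hp
      have hpb : p.1 b ≠ 0 := by
        intro h0; rw [h0, zero_smul] at hpne; exact hpne rfl
      have hle : single b 1 ≤ p.1 := by
        rw [Finsupp.single_le_iff]; omega
      obtain ⟨u, hu⟩ := exists_add_of_le hle
      have hq1 : u + single b 1 = p.1 := by rw [hu, add_comm]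
      refine ⟨(u, p.2), ?_, ?_, ?_⟩
      · rw [Finset.HasAntidiagonal.mem_antidiagonal]
        have h2 : u + p.2 + single b 1 = d + single b 1 := by
          rw [add_right_comm, hq1, hp]
        exact add_right_cancel h2
      · intro h0
        apply hpne
        rw [← hq1]
        have hub : ((u + single b 1 : ℕ →₀ ℕ)) b = u b + 1 := by
          simp [Finsupp.single_apply]
        rw [hub, ← smul_mul_assoc]
        simpa [coeff_pT] using h0
      · exact Prod.ext (by simpa using hq1) rfl
    · intro q hq hqne
      rw [coeff_pT, smul_mul_assoc]
      have hub : ((q.1 + single b 1 : ℕ →₀ ℕ)) b = q.1 b + 1 := by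
        simp [Finsupp.single_apply]
      rw [hub]
  have claim2 : (Finset.HasAntidiagonal.antidiagonal (d + single b 1)).sum
        (fun p : (ℕ →₀ ℕ) × (ℕ →₀ ℕ) => p.2 b • (coeff p.1 f * coeff p.2 g))
      = ∑ p ∈ Finset.HasAntidiagonal.antidiagonal d, coeff p.1 f * coeff p.2 (pderivT b g) := by
    symm
    refine Finset.sum_bij_ne_zero (fun q _ _ => (q.1, q.2 + single b 1)) ?_ ?_ ?_ ?_
    · intro q hq _
      rw [Finset.HasAntidiagonal.mem_antidiagonal] at hq ⊢
      rw [← add_assoc, hq]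
    · intro q₁ h₁ h₁' q₂ h₂ h₂' heq
      have h1 := congrArg Prod.fst heq
      have h2 := congrArg Prod.snd heq
      simp only at h1 h2
      exact Prod.ext h1 (add_right_cancel h2)
    · intro p hp hpne
      rw [Finset.HasAntidiagonal.mem_antidiagonal] at hp
      have hpb : p.2 b ≠ 0 := by
        intro h0; rw [h0, zero_smul] at hpne; exact hpne rfl
      have hle : single b 1 ≤ p.2 := by
        rw [Finsupp.single_le_iff]; omega
      obtain ⟨u, hu⟩ := exists_add_of_le hle
      have hq1 : u + single b 1 = p.2 := by rw [hu, add_comm]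
      refine ⟨(p.1, u), ?_, ?_, ?_⟩
      · rw [Finset.HasAntidiagonal.mem_antidiagonal]
        have h2 : p.1 + u + single b 1 = d + single b 1 := by
          rw [add_assoc, hq1, hp]
        exact add_right_cancel h2
      · intro h0
        apply hpne
        rw [← hq1]
        have hub : ((u + single b 1 : ℕ →₀ ℕ)) b = u b + 1 := by
          simp [Finsupp.single_apply]
        rw [hub, ← mul_smul_comm]
        simpa [coeff_pT] using h0
      · exact Prod.ext rfl (by simpa using hq1)
    · intro q hq hqne
      rw [coeff_pT, mul_smul_comm]
      have hub : ((q.2 + single b 1 : ℕ →₀ ℕ)) b = q.2 b + 1 := by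
        simp [Finsupp.single_apply]
      rw [hub]
  rw [claim1, claim2]

lemma support_add_single (d : ℕ →₀ ℕ) (b : ℕ) :
    (d + single b 1).support = insert b d.support := by
  ext a; rcases eq_or_ne a b with h|h <;>
    simp [Finsupp.mem_support_iff, Finsupp.single_apply, h] <;> tauto

lemma pT_C (b : ℕ) (r : PowerSeries ℂ) :
    pderivT b (MvPowerSeries.C (σ := ℕ) (R := PowerSeries ℂ) r) = 0 := by
  classical
  refine MvPowerSeries.ext fun d => ?_
  rw [coeff_pT, MvPowerSeries.coeff_C, if_neg, smul_zero, map_zero]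
  intro h
  have := congrArg (fun m : ℕ →₀ ℕ => m b) h
  simp [Finsupp.single_apply] at this

lemma pT_one (b : ℕ) : pderivT b (1 : OSRing) = 0 := by
  rw [← map_one (MvPowerSeries.C (σ := ℕ) (R := PowerSeries ℂ))]; exact pT_C b 1

lemma pT_X (b a : ℕ) :
    pderivT b (MvPowerSeries.X a : OSRing) = if a = b then 1 else 0 := by
  classical
  refine MvPowerSeries.ext fun d => ?_
  rw [coeff_pT, MvPowerSeries.coeff_X]
  rcases eq_or_ne a b with rfl|h
  · have hc : (d + single a 1 = single a 1) ↔ d = 0 := by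
      constructor
      · intro h
        have : d + single a 1 = 0 + single a 1 := by rw [h, zero_add]
        exact add_right_cancel this
      · intro h; rw [h, zero_add]
    rw [if_pos rfl, MvPowerSeries.coeff_one]
    by_cases hd : d = 0
    · rw [if_pos (hc.mpr hd), if_pos hd, hd]
      simp
    · rw [if_neg (fun h => hd (hc.mp h)), if_neg hd, smul_zero]
  · rw [if_neg h, map_zero, if_neg, smul_zero]
    intro h1
    have := congrArg (fun m : ℕ →₀ ℕ => m b) h1
    simp [Finsupp.single_apply, h] at this

lemma pX_X (a : ℕ) : pderivX (MvPowerSeries.X a : OSRing) = 0 := by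
  classical
  refine MvPowerSeries.ext fun d => ?_
  rw [coeff_pX, MvPowerSeries.coeff_X, map_zero]
  split_ifs with h
  · rw [← map_one (PowerSeries.C (R := ℂ)), PowerSeries.derivative_C]
  · rw [map_zero]

lemma pX_C (r : PowerSeries ℂ) :
    pderivX (MvPowerSeries.C (σ := ℕ) (R := PowerSeries ℂ) r)
      = MvPowerSeries.C (σ := ℕ) (R := PowerSeries ℂ) (PowerSeries.derivative (R := ℂ) r) := by
  classical
  refine MvPowerSeries.ext fun d => ?_
  rw [coeff_pX, MvPowerSeries.coeff_C, MvPowerSeries.coeff_C]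
  split_ifs with h
  · rfl
  · rw [map_zero]

lemma pX_one : pderivX (1 : OSRing) = 0 := by
  have h1 : PowerSeries.derivative (R := ℂ) 1 = 0 := by
    rw [← map_one (PowerSeries.C (R := ℂ)), PowerSeries.derivative_C]
  rw [← map_one (MvPowerSeries.C (σ := ℕ) (R := PowerSeries ℂ)), pX_C, h1, map_zero]

lemma pX_Ttil (a : ℕ) : pderivX (Ttil a) = 0 := by
  rw [Ttil, pX_sub, pX_X, zero_sub, neg_eq_zero]
  by_cases h : a = 0
  · rw [if_pos h, pX_one]
  · rw [if_neg h, pX_zero]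

lemma pT_Ttil (b a : ℕ) : pderivT b (Ttil a) = if a = b then 1 else 0 := by
  rw [Ttil, pT_sub, pT_X]
  have : pderivT b (if a = 0 then (1 : OSRing) else 0) = 0 := by
    by_cases h : a = 0
    · rw [if_pos h, pT_one]
    · rw [if_neg h, pT_zero]
  rw [this, sub_zero]

lemma D_pow {D : OSRing → OSRing} (hD : ∀ f g, D (f * g) = D f * g + f * D g)
    (f : OSRing) : ∀ n : ℕ, D (f ^ (n+1)) = ((n : ℂ) + 1) • (f ^ n * D f) := by
  intro n
  induction n with
  | zero => rw [pow_one, pow_zero, one_mul, Nat.cast_zero, zero_add, one_smul]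
  | succ n ih =>
    rw [pow_succ' f (n+1), hD, ih, mul_smul_comm]
    have h1 : f * (f ^ n * D f) = f ^ (n+1) * D f := by rw [← mul_assoc, ← pow_succ']
    rw [h1, mul_comm (D f) (f ^ (n+1))]
    have h2 : (((n + 1 : ℕ) : ℂ) + 1) • (f ^ (n+1) * D f)
        = f ^ (n+1) * D f + ((n : ℂ) + 1) • (f ^ (n+1) * D f) := by
      push_cast
      rw [add_smul, one_smul, add_comm]
    rw [h2]

lemma pX_pow (f : OSRing) (n : ℕ) :
    pderivX (f ^ (n+1)) = ((n : ℂ) + 1) • (f ^ n * pderivX f) := D_pow pX_mul f n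

lemma pT_pow (b : ℕ) (f : OSRing) (n : ℕ) :
    pderivT b (f ^ (n+1)) = ((n : ℂ) + 1) • (f ^ n * pderivT b f) := D_pow (pT_mul b) f n

lemma coeff_X_mul_zero {a : ℕ} {d : ℕ →₀ ℕ} (h : d a = 0) (f : OSRing) :
    coeff d (MvPowerSeries.X a * f) = 0 := by
  classical
  rw [coeff_mul]
  refine Finset.sum_eq_zero fun p hp => ?_
  rw [Finset.HasAntidiagonal.mem_antidiagonal] at hp
  rw [MvPowerSeries.coeff_X, if_neg, zero_mul]
  intro h1
  have h2 := congrArg (fun m : ℕ →₀ ℕ => m a) hp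
  simp only [Finsupp.add_apply, h1] at h2
  simp [Finsupp.single_apply, h] at h2

def msum (s0 : Finset ℕ) (g : ℕ → OSRing) : OSRing :=
  fun d => ∑ a ∈ s0 ∪ d.support, MvPowerSeries.coeff d (g a)

def SuppOut (s0 : Finset ℕ) (g : ℕ → OSRing) : Prop :=
  ∀ a ∉ s0, ∀ d : ℕ →₀ ℕ, d a = 0 → MvPowerSeries.coeff d (g a) = 0

lemma coeff_msum (s0 : Finset ℕ) (g : ℕ → OSRing) (d : ℕ →₀ ℕ) :
    coeff d (msum s0 g) = ∑ a ∈ s0 ∪ d.support, coeff d (g a) := rfl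

lemma coeff_msum_of {s0 : Finset ℕ} {g : ℕ → OSRing} (hg : SuppOut s0 g) (d : ℕ →₀ ℕ)
    {s : Finset ℕ} (hs : s0 ∪ d.support ⊆ s) :
    coeff d (msum s0 g) = ∑ a ∈ s, coeff d (g a) :=
  Finset.sum_subset hs fun a _ ha =>
    hg a (fun h => ha (Finset.mem_union_left _ h)) d
      (Finsupp.notMem_support_iff.mp fun h => ha (Finset.mem_union_right _ h))

lemma SuppOut.mono {s0 s1 : Finset ℕ} {g : ℕ → OSRing} (hg : SuppOut s0 g)
    (h01 : s0 ⊆ s1) : SuppOut s1 g :=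
  fun a ha d hd => hg a (fun h => ha (h01 h)) d hd

lemma SuppOut.mul_right {s0 : Finset ℕ} {g : ℕ → OSRing} (hg : SuppOut s0 g) (f : OSRing) :
    SuppOut s0 (fun a => g a * f) := by
  intro a ha d hd
  classical
  rw [coeff_mul]
  refine Finset.sum_eq_zero fun p hp => ?_
  rw [Finset.HasAntidiagonal.mem_antidiagonal] at hp
  have hp1 : p.1 a = 0 := by
    have := congrArg (fun m : ℕ →₀ ℕ => m a) hp
    simp only [Finsupp.add_apply] at this
    omega
  rw [hg a ha p.1 hp1, zero_mul]

lemma msum_shrink {s0 s1 : Finset ℕ} {g : ℕ → OSRing} (hg : SuppOut s0 g)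
    (h01 : s0 ⊆ s1) : msum s1 g = msum s0 g := by
  refine MvPowerSeries.ext fun d => ?_
  rw [coeff_msum_of (hg.mono h01) d (subset_refl _),
    coeff_msum_of hg d (Finset.union_subset_union h01 (subset_refl _))]

lemma msum_add (s0 : Finset ℕ) (g h : ℕ → OSRing) :
    msum s0 (fun a => g a + h a) = msum s0 g + msum s0 h := by
  refine MvPowerSeries.ext fun d => ?_
  rw [map_add, coeff_msum, coeff_msum, coeff_msum, ← Finset.sum_add_distrib]
  exact Finset.sum_congr rfl fun a _ => map_add _ _ _

lemma msum_smul (s0 : Finset ℕ) (c : ℂ) (g : ℕ → OSRing) :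
    msum s0 (fun a => c • g a) = c • msum s0 g := by
  refine MvPowerSeries.ext fun d => ?_
  rw [coeff_csmul, coeff_msum, coeff_msum, Finset.smul_sum]
  exact Finset.sum_congr rfl fun a _ => rfl

lemma msum_congr {s0 : Finset ℕ} {g g' : ℕ → OSRing} (h : ∀ a, g a = g' a) :
    msum s0 g = msum s0 g' := by rw [funext h]

lemma msum_ite {s0 : Finset ℕ} {b : ℕ} (hb : b ∈ s0) (f : OSRing) :
    msum s0 (fun a => if a = b then f else 0) = f := by
  classical
  refine MvPowerSeries.ext fun d => ?_
  rw [coeff_msum]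
  rw [Finset.sum_congr rfl fun a _ => apply_ite (coeff d) (a = b) f 0]
  simp only [map_zero]
  rw [Finset.sum_ite_eq' (s0 ∪ d.support) b (fun _ => coeff d f),
    if_pos (Finset.mem_union_left _ hb)]

lemma pX_msum (s0 : Finset ℕ) (g : ℕ → OSRing) :
    pderivX (msum s0 g) = msum s0 (fun a => pderivX (g a)) := by
  refine MvPowerSeries.ext fun d => ?_
  rw [coeff_pX, coeff_msum, coeff_msum, map_sum]
  exact Finset.sum_congr rfl fun a _ => rfl

lemma pT_msum (b : ℕ) (s0 : Finset ℕ) (g : ℕ → OSRing) :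
    pderivT b (msum s0 g) = msum (insert b s0) (fun a => pderivT b (g a)) := by
  refine MvPowerSeries.ext fun d => ?_
  rw [coeff_pT, coeff_msum, coeff_msum]
  have hset : s0 ∪ (d + single b 1).support = insert b s0 ∪ d.support := by
    rw [support_add_single, Finset.union_insert, Finset.insert_union]
  rw [hset, Finset.smul_sum]
  exact Finset.sum_congr rfl fun a _ => rfl

lemma msum_mul {s0 : Finset ℕ} {g : ℕ → OSRing} (hg : SuppOut s0 g) (f : OSRing) :
    msum s0 g * f = msum s0 (fun a => g a * f) := by
  classical
  refine MvPowerSeries.ext fun d => ?_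
  rw [coeff_mul, coeff_msum]
  have hp1 : ∀ p ∈ Finset.HasAntidiagonal.antidiagonal d,
      coeff p.1 (msum s0 g) * coeff p.2 f
        = ∑ a ∈ s0 ∪ d.support, coeff p.1 (g a) * coeff p.2 f := by
    intro p hp
    rw [Finset.HasAntidiagonal.mem_antidiagonal] at hp
    rw [coeff_msum_of hg p.1 (Finset.union_subset_union (subset_refl _) ?_), Finset.sum_mul]
    intro a ha
    rw [Finsupp.mem_support_iff] at ha ⊢
    have := congrArg (fun m : ℕ →₀ ℕ => m a) hp
    simp only [Finsupp.add_apply] at this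
    omega
  rw [Finset.sum_congr rfl hp1, Finset.sum_comm]
  exact Finset.sum_congr rfl fun a _ => by rw [MvPowerSeries.coeff_mul]

def CXv : OSRing := MvPowerSeries.C (σ := ℕ) (R := PowerSeries ℂ) xser

def Gf (Q : OSRing) : ℕ → OSRing := fun a => ((a.factorial : ℂ)⁻¹) • (Ttil a * Q ^ (2*a+1))

def Hf (Q : OSRing) : ℕ → OSRing := fun a => ((a.factorial : ℂ)⁻¹) • (Ttil a * Q ^ (2*a))

def Ebf (Q : OSRing) : ℕ → OSRing :=
  fun b => (((b.factorial : ℂ) * (2*(b:ℂ)+1))⁻¹) • (Ttil b * Q ^ (2*b+1))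

def Din (Q : OSRing) (a : ℕ) : ℕ → OSRing := fun b =>
  (((a.factorial : ℂ) * (b.factorial : ℂ) * ((a:ℂ) + (b:ℂ) + 1))⁻¹) •
    (Ttil a * Ttil b * Q ^ (2*a+2*b+2))

def Ein (Q : OSRing) : ℕ → OSRing := fun b =>
  (((b.factorial : ℂ) * (2*(b:ℂ)+1))⁻¹) • (CXv * Ttil b * Q ^ (2*b+1))

lemma suppOut_shape (c : ℕ → ℂ) (M : ℕ → OSRing) :
    SuppOut {0} (fun a => c a • (Ttil a * M a)) := by
  intro a ha d hd
  have hA : Ttil a = MvPowerSeries.X a := by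
    rw [Ttil, if_neg (by simpa using ha), sub_zero]
  rw [coeff_csmul, hA, coeff_X_mul_zero hd, smul_zero]

lemma Ttil_mul (a : ℕ) (M : OSRing) :
    Ttil a * M = MvPowerSeries.X a * M - (if a = 0 then M else 0) := by
  rw [Ttil, sub_mul]
  congr 1
  by_cases h : a = 0
  · rw [if_pos h, if_pos h, one_mul]
  · rw [if_neg h, if_neg h, zero_mul]

lemma dxser : PowerSeries.derivative (R := ℂ) xser = 1 := by
  have h2 : (2 : PowerSeries ℂ) = PowerSeries.C (R := ℂ) 2 := by simp [map_ofNat]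
  rw [xser, map_sub, h2, PowerSeries.derivative_C, PowerSeries.derivative_X, sub_zero]

lemma pX_CX : pderivX CXv = 1 := by
  rw [CXv, pX_C, dxser, map_one]

lemma pX_CXsq : pderivX (CXv ^ 2) = (2:ℂ) • CXv := by
  have h : CXv ^ 2 = CXv ^ (1+1) := by norm_num
  rw [h, pX_pow, pX_CX, pow_one, mul_one]
  norm_num

lemma star {Q : OSRing} (hQ : SolvesQ Q) :
    msum {0} (Gf Q) = ((1:ℂ)/2) • CXv := by
  classical
  refine MvPowerSeries.ext fun d => ?_
  rw [coeff_msum, coeff_csmul]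
  have step1 : ∀ a, coeff d (Gf Q a)
      = (a.factorial : ℂ)⁻¹ • coeff d (MvPowerSeries.X a * Q ^ (2*a+1))
        - (if a = 0 then coeff d Q else 0) := by
    intro a
    show coeff d ((a.factorial : ℂ)⁻¹ • (Ttil a * Q ^ (2*a+1))) = _
    rw [coeff_csmul, Ttil_mul, map_sub, smul_sub]
    congr 1
    rw [apply_ite (coeff d), map_zero, smul_ite, smul_zero]
    by_cases h : a = 0
    · rw [if_pos h, if_pos h]
      subst h
      rw [Nat.factorial_zero, Nat.cast_one, inv_one, one_smul, pow_one]
    · rw [if_neg h, if_neg h]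
  rw [Finset.sum_congr rfl fun a _ => step1 a, Finset.sum_sub_distrib]
  rw [Finset.sum_ite_eq' (({0} : Finset ℕ) ∪ d.support) 0 (fun _ => coeff d Q),
    if_pos (Finset.mem_union_left _ (Finset.mem_singleton_self 0))]
  have step2 : ∑ a ∈ ({0} : Finset ℕ) ∪ d.support,
      (a.factorial : ℂ)⁻¹ • coeff d (MvPowerSeries.X a * Q ^ (2*a+1))
      = ∑ a ∈ d.support, (a.factorial : ℂ)⁻¹ • coeff d (MvPowerSeries.X a * Q ^ (2*a+1)) := by
    symm
    refine Finset.sum_subset Finset.subset_union_right fun a _ ha => ?_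
    rw [coeff_X_mul_zero (Finsupp.notMem_support_iff.mp ha), smul_zero]
  have hs : ∑ a ∈ d.support,
      (a.factorial : ℂ)⁻¹ • coeff d (MvPowerSeries.X a * Q ^ (2*a+1))
      = coeff d Q
        - coeff d (MvPowerSeries.C (σ := ℕ) (R := PowerSeries ℂ) ((-(1:ℂ)/2) • xser)) := by
    rw [hQ d]; ring
  have hC : coeff d (MvPowerSeries.C (σ := ℕ) (R := PowerSeries ℂ) ((-(1:ℂ)/2) • xser))
      = -(((1:ℂ)/2) • coeff d CXv) := by
    classical
    rw [CXv, MvPowerSeries.coeff_C, MvPowerSeries.coeff_C]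
    split_ifs with h
    · rw [← neg_smul]; norm_num
    · simp
  rw [step2, hs, hC]
  ring

lemma hHQ_lem (Q : OSRing) : ∀ a, Hf Q a * Q = Gf Q a := by
  intro a
  show ((a.factorial : ℂ)⁻¹ • (Ttil a * Q ^ (2*a))) * Q = _
  rw [smul_mul_assoc, mul_assoc, ← pow_succ]
  rfl

lemma fact_ne (n : ℕ) : ((n.factorial : ℂ)) ≠ 0 :=
  Nat.cast_ne_zero.mpr (Nat.factorial_ne_zero n)

lemma odd_ne (b : ℕ) : (2*(b:ℂ)+1) ≠ 0 := by
  have h : ((2*b+1 : ℕ) : ℂ) ≠ 0 := Nat.cast_ne_zero.mpr (by omega)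
  push_cast at h
  exact h

lemma abo_ne (a b : ℕ) : ((a:ℂ)+(b:ℂ)+1) ≠ 0 := by
  have h : ((a+b+1 : ℕ) : ℂ) ≠ 0 := Nat.cast_ne_zero.mpr (by omega)
  push_cast at h
  exact h

lemma pX_Din (Q : OSRing) (a b : ℕ) :
    pderivX (Din Q a b) = (2:ℂ) • (Gf Q a * (Hf Q b * pderivX Q)) := by
  simp only [Din, Gf, Hf]
  have hm : Ttil a * Ttil b * Q ^ (2*a+2*b+2)
      = Ttil a * (Ttil b * Q ^ ((2*a+2*b+1)+1)) := by
    rw [show 2*a+2*b+2 = (2*a+2*b+1)+1 by omega, mul_assoc]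
  rw [pX_smul, hm, pX_mul, pX_Ttil, zero_mul, zero_add, pX_mul, pX_Ttil, zero_mul,
    zero_add, pX_pow]
  simp only [smul_mul_assoc, mul_smul_comm, smul_smul]
  congr 1
  · have h1 := fact_ne a
    have h2 := fact_ne b
    have h3 := abo_ne a b
    push_cast
    field_simp
    ring
  · ring

lemma pX_Ein (Q : OSRing) (b : ℕ) :
    pderivX (Ein Q b) = Ebf Q b + CXv * (Hf Q b * pderivX Q) := by
  simp only [Ein, Ebf, Hf]
  rw [pX_smul, mul_assoc, pX_mul, pX_CX, one_mul, pX_mul, pX_Ttil, zero_mul, zero_add,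
    pX_pow, smul_add]
  congr 1
  simp only [smul_mul_assoc, mul_smul_comm, smul_smul]
  congr 1
  · have h1 := fact_ne b
    have h2 := odd_ne b
    push_cast
    field_simp
  · ring

lemma pX_Ebf (Q : OSRing) (b : ℕ) :
    pderivX (Ebf Q b) = Hf Q b * pderivX Q := by
  simp only [Ebf, Hf]
  rw [pX_smul, pX_mul, pX_Ttil, zero_mul, zero_add, pX_pow]
  simp only [smul_mul_assoc, mul_smul_comm, smul_smul]
  congr 1
  · have h1 := fact_ne b
    have h2 := odd_ne b
    push_cast
    field_simp
  · ring

lemma pT_Ebf (Q : OSRing) (c a : ℕ) :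
    pderivT c (Ebf Q a)
      = (if a = c then (((c.factorial : ℂ) * (2*(c:ℂ)+1))⁻¹) • Q ^ (2*c+1) else 0)
        + Hf Q a * pderivT c Q := by
  simp only [Ebf, Hf]
  rw [pT_smul, pT_mul, pT_Ttil, pT_pow, smul_add]
  congr 1
  · by_cases h : a = c
    · subst h
      rw [if_pos rfl, if_pos rfl, one_mul]
    · rw [if_neg h, if_neg h, zero_mul, smul_zero]
  · simp only [smul_mul_assoc, mul_smul_comm, smul_smul]
    congr 1
    · have h1 := fact_ne a
      have h2 := odd_ne a
      push_cast
      field_simp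
    · ring

lemma F0_eq (Q LQ : OSRing) :
    F0 Q LQ
      = ((1:ℂ)/2) • msum {0} (fun a => msum {0} (Din Q a))
        - msum {0} (Ein Q)
        + ((1:ℂ)/4) • (CXv ^ 2 * LQ) := by
  refine MvPowerSeries.ext fun d => ?_
  simp only [F0, msum, Din, Ein, CXv, Finset.insert_eq]
  rfl

lemma pT_CX (b : ℕ) : pderivT b CXv = 0 := by rw [CXv]; exact pT_C b xser

section Main

variable {Q LQ : OSRing}

lemma hG_lem : SuppOut {0} (Gf Q) :=
  suppOut_shape (fun a => ((a.factorial : ℂ)⁻¹)) (fun a => Q ^ (2*a+1))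

lemma hH_lem : SuppOut {0} (Hf Q) :=
  suppOut_shape (fun a => ((a.factorial : ℂ)⁻¹)) (fun a => Q ^ (2*a))

lemma hstarQ_lem (hQ : SolvesQ Q) : msum {0} (Hf Q) * Q = ((1:ℂ)/2) • CXv := by
  rw [msum_mul hH_lem, msum_congr (hHQ_lem Q), star hQ]

lemma hW_lem (hQ : SolvesQ Q) (hLQ : IsLogQ Q LQ) :
    msum {0} (fun b => Hf Q b * pderivX Q) = ((1:ℂ)/2) • (CXv * pderivX LQ) := by
  obtain ⟨hL1, hL2, -⟩ := hLQ
  rw [← msum_mul hH_lem, ← hL1,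
    show msum {0} (Hf Q) * (pderivX LQ * Q) = msum {0} (Hf Q) * Q * pderivX LQ by ring,
    hstarQ_lem hQ, smul_mul_assoc]

lemma FX_eq (hQ : SolvesQ Q) (hLQ : IsLogQ Q LQ) :
    pderivX (F0 Q LQ) = ((1:ℂ)/2) • (CXv * LQ) - msum {0} (Ebf Q) := by
  have hHX : SuppOut {0} (fun b => Hf Q b * pderivX Q) := SuppOut.mul_right hH_lem _
  have hMA : msum {0} (fun a => msum {0} (fun b => (2:ℂ) • (Gf Q a * (Hf Q b * pderivX Q))))
      = (2:ℂ) • ((((1:ℂ)/2) • CXv) * (((1:ℂ)/2) • (CXv * pderivX LQ))) := by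
    have hin : ∀ a, msum {0} (fun b => (2:ℂ) • (Gf Q a * (Hf Q b * pderivX Q)))
        = (2:ℂ) • (Gf Q a * msum {0} (fun b => Hf Q b * pderivX Q)) := by
      intro a
      rw [msum_smul]
      congr 1
      rw [msum_congr (fun b => mul_comm (Gf Q a) (Hf Q b * pderivX Q)),
        ← msum_mul hHX (Gf Q a), mul_comm]
    rw [msum_congr hin, msum_smul]
    congr 1
    rw [← msum_mul hG_lem, star hQ, hW_lem hQ hLQ]
  have hMB : msum {0} (fun b => Ebf Q b + CXv * (Hf Q b * pderivX Q))
      = msum {0} (Ebf Q) + CXv * (((1:ℂ)/2) • (CXv * pderivX LQ)) := by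
    rw [msum_add]
    congr 1
    rw [msum_congr (fun b => mul_comm CXv (Hf Q b * pderivX Q)),
      ← msum_mul hHX CXv, hW_lem hQ hLQ, mul_comm]
  rw [F0_eq, pX_add, pX_sub, pX_smul, pX_smul]
  simp only [pX_msum, pX_Din, pX_Ein]
  rw [pX_mul, pX_CXsq, hMA, hMB]
  simp only [smul_mul_assoc, mul_smul_comm, smul_smul, smul_add, pow_two, mul_assoc]
  module

lemma part1 (hQ : SolvesQ Q) (hLQ : IsLogQ Q LQ) (b : ℕ) :
    pderivX (pderivT b (F0 Q LQ))
      = (-((b.factorial : ℂ) * (2*(b:ℂ)+1))⁻¹) • Q ^ (2*b+1) := by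
  obtain ⟨hL1, hL2, hL3⟩ := hLQ
  rw [pX_pT_comm, FX_eq hQ ⟨hL1, hL2, hL3⟩, pT_sub, pT_smul, pT_mul, pT_CX, zero_mul,
    zero_add]
  simp only [pT_msum]
  rw [msum_congr (fun a => pT_Ebf Q b a), msum_add, msum_ite (Finset.mem_insert_self b {0}),
    msum_shrink (SuppOut.mul_right hH_lem (pderivT b Q)) (Finset.subset_insert _ _),
    ← msum_mul hH_lem, ← hL2 b,
    show msum {0} (Hf Q) * (pderivT b LQ * Q) = msum {0} (Hf Q) * Q * pderivT b LQ by ring,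
    hstarQ_lem hQ, smul_mul_assoc, neg_smul]
  abel

lemma part2 (hQ : SolvesQ Q) (hLQ : IsLogQ Q LQ) :
    pderivX (pderivX (F0 Q LQ)) = ((1:ℂ)/2) • LQ := by
  rw [FX_eq hQ hLQ, pX_sub, pX_smul, pX_mul, pX_CX, one_mul]
  simp only [pX_msum, pX_Ebf]
  rw [hW_lem hQ hLQ, smul_add]
  abel

end Main

end OSaux

/-- `∂²F₀/∂x∂T_{2b+1} = −Q^{2b+1}/(b!(2b+1))` for all `b ≥ 0`, and
`∂²F₀/∂x² = (1/2)·log Q`. -/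
theorem okuyama_sakai_F0_x (Q LQ : OSRing) (hQ : SolvesQ Q) (hLQ : IsLogQ Q LQ) :
    (∀ b : ℕ,
      pderivX (pderivT b (F0 Q LQ))
        = (-((b.factorial : ℂ) * (2*(b:ℂ)+1))⁻¹) • Q ^ (2*b+1)) ∧
    pderivX (pderivX (F0 Q LQ)) = ((1:ℂ)/2) • LQ :=
  ⟨fun b => OSaux.part1 hQ hLQ b, OSaux.part2 hQ hLQ⟩
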